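/- Let p be an odd prime and let G be a finite p-group of nilpotency class two with G' = Z(G). Let Δ be a bilinear form on G with associated circle operation x ∘ y = x·y·Δ(x, y). Then Δ is symmetric if and only if there exists a bijection θ: G → G such that θ(x·y) = θ(x) ∘ θ(y) for all x, y ∈ G, θ(x)·x⁻¹ ∈ G' for all x ∈ G, and θ(z) = z for all z ∈ G' (i.e., an isomorphism G → (G, ∘) inducing the identity on G/G' and on G'). -/

import Mathlib

/-!
If `Δ` is symmetric, then `Δ(xy, xy) = Δ(x, x)·Δ(y, y)·Δ(x, y)²` with all factors central, so in a
group of odd order `x ↦ x·Δ(x, x)^{1/2}` turns products into circle products. It is a bijection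
with inverse `x ↦ x·Δ(x, x)^{-1/2}` because `Δ` only sees cosets of `G'`.
Conversely, an isomorphism `θ` of the required kind moves every element by a central factor and
fixes `[x, y]`; evaluating `θ` on `xy = (yx) ∘ [x, y]` and on `x · y` gives `Δ(y, x) = Δ(x, y)`.
-/

/-- The commutator `[x, y] = x⁻¹ * y⁻¹ * x * y` in the paper's convention. -/
def pcomm {G : Type*} [Group G] (x y : G) : G := x⁻¹ * y⁻¹ * x * y

open scoped commutatorElement in
theorem pcomm_mem_commutator {G : Type*} [Group G] (x y : G) :
    pcomm x y ∈ commutator G := by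
  have h : pcomm x y = ⁅x⁻¹, y⁻¹⁆ := by
    simp [pcomm, commutatorElement_def, mul_assoc]
  rw [h, commutator]
  exact Subgroup.commutator_mem_commutator (Subgroup.mem_top _) (Subgroup.mem_top _)

/-- A bilinear form on a group `G` of class two with `G' = Z(G)`: a map
`Δ : G/G' × G/G' → G'` which is multiplicative in each variable. -/
def IsBilinearForm {G : Type*} [Group G] (Δ : G → G → G) : Prop :=
  (∀ x y : G, Δ x y ∈ commutator G) ∧
  (∀ x y w : G, w ∈ commutator G → Δ (x * w) y = Δ x y) ∧
  (∀ x y w : G, w ∈ commutator G → Δ x (y * w) = Δ x y) ∧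
  (∀ x₁ x₂ y : G, Δ (x₁ * x₂) y = Δ x₁ y * Δ x₂ y) ∧
  (∀ x y₁ y₂ : G, Δ x (y₁ * y₂) = Δ x y₁ * Δ x y₂)

/-- The circle operation `x ∘ y = x·y·Δ(x, y)` associated to a bilinear form `Δ`. -/
def circ {G : Type*} [Group G] (Δ : G → G → G) (x y : G) : G := x * y * Δ x y

/-- The circle inverse `x^{⊖1} = x⁻¹·Δ(x, x)`. -/
def oinv {G : Type*} [Group G] (Δ : G → G → G) (x : G) : G := x⁻¹ * Δ x x

/-- The circle commutator `[x, y]_∘ = x^{⊖1} ∘ y^{⊖1} ∘ x ∘ y`. -/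
def ocomm {G : Type*} [Group G] (Δ : G → G → G) (x y : G) : G :=
  circ Δ (circ Δ (circ Δ (oinv Δ x) (oinv Δ y)) x) y

section

variable {G : Type*} [Group G]

theorem mul_eq_mul_mul_pcomm (x y : G) : x * y = y * x * pcomm x y := by
  simp only [pcomm]
  group

theorem exists_zpow_two_mul_eq_self_of_odd_card [Finite G] (hG : Odd (Nat.card G)) :
    ∃ k : ℤ, ∀ g : G, g ^ (2 * k) = g := by
  obtain ⟨m, hm⟩ := hG
  refine ⟨m + 1, fun g => ?_⟩
  have h : (2 * (m + 1 : ℤ)) = ((Nat.card G + 1 : ℕ) : ℤ) := by push_cast; omega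
  rw [h, zpow_natCast, pow_succ, pow_card_eq_one', one_mul]

theorem commute_of_mem_commutator (hcent : commutator G ≤ Subgroup.center G) {w : G}
    (hw : w ∈ commutator G) (g : G) : Commute g w :=
  Subgroup.mem_center_iff.mp (hcent hw) g

/-- `x ↦ x·Δ(x, x)^{1/2}` when `w ^ (2 * k) = w` on `G'`. -/
def diagTwist (Δ : G → G → G) (k : ℤ) (x : G) : G := x * Δ x x ^ k

namespace IsBilinearForm

variable {Δ : G → G → G} (hΔ : IsBilinearForm Δ)
include hΔ

theorem mem_commutator (x y : G) : Δ x y ∈ commutator G := hΔ.1 x y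

theorem map_mul_left_of_mem {w : G} (hw : w ∈ commutator G) (x y : G) : Δ (x * w) y = Δ x y :=
  hΔ.2.1 x y w hw

theorem map_mul_right_of_mem {w : G} (hw : w ∈ commutator G) (x y : G) : Δ x (y * w) = Δ x y :=
  hΔ.2.2.1 x y w hw

theorem map_mul_left (x₁ x₂ y : G) : Δ (x₁ * x₂) y = Δ x₁ y * Δ x₂ y := hΔ.2.2.2.1 x₁ x₂ y

theorem map_mul_right (x y₁ y₂ : G) : Δ x (y₁ * y₂) = Δ x y₁ * Δ x y₂ := hΔ.2.2.2.2 x y₁ y₂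

theorem map_of_mem_right {w : G} (hw : w ∈ commutator G) (x : G) : Δ x w = 1 := by
  have h := hΔ.map_mul_right x 1 1
  rw [one_mul, left_eq_mul] at h
  rw [← one_mul w, hΔ.map_mul_right_of_mem hw, h]

theorem circ_of_mem_right {w : G} (hw : w ∈ commutator G) (x : G) : circ Δ x w = x * w := by
  rw [circ, hΔ.map_of_mem_right hw, mul_one]

theorem circ_mul_mul (hcent : commutator G ≤ Subgroup.center G) {u v : G}
    (hu : u ∈ commutator G) (hv : v ∈ commutator G) (x y : G) :
    circ Δ (x * u) (y * v) = circ Δ x y * (u * v) := by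
  rw [circ, circ, hΔ.map_mul_left_of_mem hu, hΔ.map_mul_right_of_mem hv,
    (commute_of_mem_commutator hcent hu y).symm.mul_mul_mul_comm,
    (commute_of_mem_commutator hcent (hΔ.mem_commutator x y) _).right_comm]

theorem map_diagTwist_diagTwist (k l : ℤ) (x y : G) :
    Δ (diagTwist Δ k x) (diagTwist Δ l y) = Δ x y := by
  rw [diagTwist, diagTwist, hΔ.map_mul_left_of_mem (zpow_mem (hΔ.mem_commutator x x) k),
    hΔ.map_mul_right_of_mem (zpow_mem (hΔ.mem_commutator y y) l)]

theorem diagTwist_neg_diagTwist (k : ℤ) (x : G) : diagTwist Δ (-k) (diagTwist Δ k x) = x := by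
  rw [diagTwist, hΔ.map_diagTwist_diagTwist, diagTwist, zpow_neg, mul_inv_cancel_right]

theorem bijective_diagTwist (k : ℤ) : Function.Bijective (diagTwist Δ k) := by
  refine Function.bijective_iff_has_inverse.mpr ⟨diagTwist Δ (-k), ?_, fun x => ?_⟩
  · exact hΔ.diagTwist_neg_diagTwist k
  · simpa only [neg_neg] using hΔ.diagTwist_neg_diagTwist (-k) x

theorem diagTwist_mul_inv_mem (k : ℤ) (x : G) : diagTwist Δ k x * x⁻¹ ∈ commutator G :=
  (Subgroup.commutator_normal ⊤ ⊤).conj_mem _ (zpow_mem (hΔ.mem_commutator x x) k) x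

theorem diagTwist_of_mem {z : G} (hz : z ∈ commutator G) (k : ℤ) : diagTwist Δ k z = z := by
  rw [diagTwist, hΔ.map_of_mem_right hz, one_zpow, mul_one]

theorem map_mul_self_of_symm (hsym : ∀ x y : G, Δ y x = Δ x y) (x y : G) :
    Δ (x * y) (x * y) = Δ x x * Δ x y ^ 2 * Δ y y := by
  rw [hΔ.map_mul_left, hΔ.map_mul_right, hΔ.map_mul_right, hsym x y]
  simp only [sq, mul_assoc]

theorem diagTwist_mul_of_symm (hcent : commutator G ≤ Subgroup.center G)
    (hsym : ∀ x y : G, Δ y x = Δ x y) {k : ℤ} (hk : ∀ w ∈ commutator G, w ^ (2 * k) = w)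
    (x y : G) : diagTwist Δ k (x * y) = circ Δ (diagTwist Δ k x) (diagTwist Δ k y) := by
  have hcomm {w : G} (hw : w ∈ commutator G) (g : G) := commute_of_mem_commutator hcent hw g
  have hxx := hΔ.mem_commutator x x
  have hxy := hΔ.mem_commutator x y
  have hyy := hΔ.mem_commutator y y
  have hpow : Δ (x * y) (x * y) ^ k = Δ x y * (Δ x x ^ k * Δ y y ^ k) := by
    rw [hΔ.map_mul_self_of_symm hsym, (hcomm hyy _).mul_zpow, (hcomm (pow_mem hxy 2) _).mul_zpow,
      ← zpow_natCast, ← zpow_mul, Nat.cast_ofNat, hk _ hxy, (hcomm hxy _).eq, mul_assoc]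
  rw [diagTwist, diagTwist, diagTwist, hΔ.circ_mul_mul hcent (zpow_mem hxx k) (zpow_mem hyy k),
    hpow, circ]
  simp only [mul_assoc]

theorem symm_of_circ_hom (hcent : commutator G ≤ Subgroup.center G) {θ : G → G}
    (hmul : ∀ x y : G, θ (x * y) = circ Δ (θ x) (θ y))
    (hmod : ∀ x : G, θ x * x⁻¹ ∈ commutator G) (hfix : ∀ z : G, z ∈ commutator G → θ z = z)
    (x y : G) : Δ y x = Δ x y := by
  have hcomm {w : G} (hw : w ∈ commutator G) (g : G) := commute_of_mem_commutator hcent hw g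
  have hθ (x : G) : ∃ u ∈ commutator G, θ x = x * u :=
    ⟨θ x * x⁻¹, hmod x, by rw [(hcomm (hmod x) x).eq, inv_mul_cancel_right]⟩
  obtain ⟨u, hu, hθx⟩ := hθ x
  obtain ⟨v, hv, hθy⟩ := hθ y
  have hc := pcomm_mem_commutator x y
  have h₁ : θ (x * y) = circ Δ x y * (u * v) := by
    rw [hmul, hθx, hθy, hΔ.circ_mul_mul hcent hu hv]
  have h₂ : θ (y * x * pcomm x y) = x * y * Δ y x * (u * v) := by
    rw [hmul, hfix _ hc, hΔ.circ_of_mem_right hc, hmul, hθy, hθx, hΔ.circ_mul_mul hcent hv hu,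
      circ, (hcomm hc _).right_comm, (hcomm hc _).right_comm, ← mul_eq_mul_mul_pcomm,
      (hcomm hu v).eq]
  rw [← mul_eq_mul_mul_pcomm] at h₂
  simpa only [circ, mul_right_cancel_iff, mul_left_cancel_iff] using h₂.symm.trans h₁

end IsBilinearForm

end

theorem stmt_17_general {p : ℕ} (hp : p.Prime) (hodd : Odd p)
    {G : Type*} [Group G] [Fintype G] (hpG : IsPGroup p G)
    (hGZ : commutator G = Subgroup.center G)
    (Δ : G → G → G) (hΔ : IsBilinearForm Δ) :
    (∀ x y : G, Δ y x = Δ x y) ↔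
      ∃ θ : G → G, Function.Bijective θ ∧
        (∀ x y : G, θ (x * y) = circ Δ (θ x) (θ y)) ∧
        (∀ x : G, θ x * x⁻¹ ∈ commutator G) ∧
        (∀ z : G, z ∈ commutator G → θ z = z) := by
  constructor
  · intro hsym
    have : Fact p.Prime := ⟨hp⟩
    obtain ⟨n, hn⟩ := IsPGroup.iff_card.mp hpG
    obtain ⟨k, hk⟩ := exists_zpow_two_mul_eq_self_of_odd_card (hn ▸ hodd.pow)
    exact ⟨diagTwist Δ k, hΔ.bijective_diagTwist k,
      hΔ.diagTwist_mul_of_symm hGZ.le hsym fun w _ => hk w,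
      hΔ.diagTwist_mul_inv_mem k, fun z hz => hΔ.diagTwist_of_mem hz k⟩
  · rintro ⟨θ, -, hmul, hmod, hfix⟩
    exact hΔ.symm_of_circ_hom hGZ.le hmul hmod hfix

/-- a bilinear form `Δ` on `G` is symmetric if and only if there is an
isomorphism `θ : G → (G, ∘)` which induces the identity on `G/G'` and on `G'`. -/
theorem stmt_17 {p : ℕ} (hp : p.Prime) (hodd : Odd p)
    {G : Type*} [Group G] [Fintype G] (hpG : IsPGroup p G)
    (hc2 : (⊤ : Subgroup G).lowerCentralSeries 2 = ⊥) (hc1 : (⊤ : Subgroup G).lowerCentralSeries 1 ≠ ⊥)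
    (hGZ : commutator G = Subgroup.center G)
    (Δ : G → G → G) (hΔ : IsBilinearForm Δ) :
    (∀ x y : G, Δ y x = Δ x y) ↔
      ∃ θ : G → G, Function.Bijective θ ∧
        (∀ x y : G, θ (x * y) = circ Δ (θ x) (θ y)) ∧
        (∀ x : G, θ x * x⁻¹ ∈ commutator G) ∧
        (∀ z : G, z ∈ commutator G → θ z = z) :=
  stmt_17_general hp hodd hpG hGZ Δ hΔ
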